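/- arXiv:2301.07601 — 3 statements merged into one kernel-verified Lean document; each statement's English description precedes it below -/
import Mathlib

section
/- Along any differentiable solution of the OIM dynamics, the energy dissipates at rate equal to −2 times the squared speed: if θ : ℝ → ℝ^N is differentiable with θ'(t) = f(θ(t)) for all t, then d/dt [E(θ(t))] = −2·∑_i (f(θ(t)) i)² ≤ 0 for all t. -/
/-- The OIM energy (Lyapunov) function
`E(θ) = -K ∑_{i ≠ j} W i j cos(θ i - θ j) - K_s ∑ i cos(2 θ i)`. -/
noncomputable def oimEnergy (N : ℕ) (W : Fin N → Fin N → ℝ) (K Ks : ℝ)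
    (θ : Fin N → ℝ) : ℝ :=
  -K * ∑ i, ∑ j ∈ Finset.univ.filter (fun j => j ≠ i), W i j * Real.cos (θ i - θ j)
    - Ks * ∑ i, Real.cos (2 * θ i)

/-- The OIM vector field
`f(θ) i = -K ∑_{j ≠ i} W i j sin(θ i - θ j) - K_s sin(2 θ i)`. -/
noncomputable def oimField (N : ℕ) (W : Fin N → Fin N → ℝ) (K Ks : ℝ)
    (θ : Fin N → ℝ) : Fin N → ℝ :=
  fun i => -K * ∑ j ∈ Finset.univ.filter (fun j => j ≠ i), W i j * Real.sin (θ i - θ j)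
    - Ks * Real.sin (2 * θ i)

/-!
The energy is a gradient potential for the dynamics: by the symmetry of `W`, each pair `{i, j}`
contributes to `∂E/∂θ_i` twice, so that `∇E = -2 f`. The chain rule along a solution then gives
`dE/dt = ⟨∇E, θ'⟩ = -2 ‖f‖²`.
-/

open Finset Real

theorem sum_filter_ne_eq_sum {ι M : Type*} [Fintype ι] [DecidableEq ι] [AddCommMonoid M]
    {g : ι → M} {i : ι} (hg : g i = 0) : ∑ j ∈ univ.filter (fun j => j ≠ i), g j = ∑ j, g j := by
  rw [filter_ne', sum_erase _ hg]

theorem sum_sum_mul_sub_of_antisymm {ι R : Type*} [Fintype ι] [CommRing R] {A : ι → ι → R}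
    (hA : ∀ i j, A j i = -A i j) (v : ι → R) :
    ∑ i, ∑ j, A i j * (v i - v j) = 2 * ∑ i, ∑ j, A i j * v i := by
  have hswap : ∑ i, ∑ j, A i j * v j = -∑ i, ∑ j, A i j * v i := by
    rw [sum_comm, ← sum_neg_distrib]
    exact sum_congr rfl fun i _ => by
      rw [← sum_neg_distrib]
      exact sum_congr rfl fun j _ => by rw [hA]; ring
  simp only [mul_sub, sum_sub_distrib, hswap]
  ring

variable {N : ℕ}

theorem oimField_apply (W : Fin N → Fin N → ℝ) (K Ks : ℝ) (θ : Fin N → ℝ) (i : Fin N) :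
    oimField N W K Ks θ i = -K * ∑ j, W i j * sin (θ i - θ j) - Ks * sin (2 * θ i) := by
  rw [oimField, sum_filter_ne_eq_sum (by simp)]

theorem hasDerivAt_oimEnergy_comp {W : Fin N → Fin N → ℝ} (hsymm : ∀ i j, W i j = W j i)
    (K Ks : ℝ) {γ : ℝ → Fin N → ℝ} {v : Fin N → ℝ} {t : ℝ} (hγ : HasDerivAt γ v t) :
    HasDerivAt (fun τ => oimEnergy N W K Ks (γ τ))
      (-2 * ∑ i, oimField N W K Ks (γ t) i * v i) t := by
  have hγi : ∀ i, HasDerivAt (fun τ => γ τ i) (v i) t := hasDerivAt_pi.mp hγ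
  have hchain : HasDerivAt (fun τ => oimEnergy N W K Ks (γ τ))
      (-K * ∑ i, ∑ j ∈ univ.filter (fun j => j ≠ i),
          W i j * (-sin (γ t i - γ t j) * (v i - v j))
        - Ks * ∑ i, -sin (2 * γ t i) * (2 * v i)) t := by
    refine HasDerivAt.sub (.const_mul _ (.fun_sum fun i _ => .fun_sum fun j _ => ?_))
      (.const_mul _ (.fun_sum fun i _ => ?_))
    · exact (((hγi i).sub (hγi j)).cos).const_mul _
    · exact ((hγi i).const_mul 2).cos
  convert hchain using 1
  set A : Fin N → Fin N → ℝ := fun i j => W i j * sin (γ t i - γ t j)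
  have hA : ∀ i j, A j i = -A i j := fun i j => by
    simp only [A]
    rw [hsymm j i, ← neg_sub, sin_neg, mul_neg]
  have hpair : ∑ i, ∑ j ∈ univ.filter (fun j => j ≠ i),
      W i j * (-sin (γ t i - γ t j) * (v i - v j)) = -(2 * ∑ i, (∑ j, A i j) * v i) := by
    simp only [sum_mul, ← sum_sum_mul_sub_of_antisymm hA, ← sum_neg_distrib]
    refine sum_congr rfl fun i _ => ?_
    rw [sum_filter_ne_eq_sum (by simp)]
    exact sum_congr rfl fun j _ => by ring
  simp only [hpair, mul_sum, ← sum_neg_distrib, ← sum_sub_distrib]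
  exact sum_congr rfl fun i _ => by simp only [oimField_apply, A]; ring

theorem oim_energy_dissipation_general (N : ℕ) (W : Fin N → Fin N → ℝ)
    (hsymm : ∀ i j, W i j = W j i)
    (K Ks : ℝ) (θ : ℝ → Fin N → ℝ) (hθ : Differentiable ℝ θ)
    (hode : ∀ t, deriv θ t = oimField N W K Ks (θ t)) (t : ℝ) :
    HasDerivAt (fun τ : ℝ => oimEnergy N W K Ks (θ τ))
      (-2 * ∑ i, (oimField N W K Ks (θ t) i) ^ 2) t ∧
    -2 * ∑ i, (oimField N W K Ks (θ t) i) ^ 2 ≤ 0 := by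
  have hθt : HasDerivAt θ (oimField N W K Ks (θ t)) t := hode t ▸ (hθ t).hasDerivAt
  refine ⟨by simpa only [← sq] using hasDerivAt_oimEnergy_comp hsymm K Ks hθt, ?_⟩
  have hnonneg := sum_nonneg fun i (_ : i ∈ univ) => sq_nonneg (oimField N W K Ks (θ t) i)
  linarith

/-- Along any differentiable solution of the OIM dynamics `θ' = f(θ)`, the energy
dissipates at rate `-2 ∑ i (f(θ(t)) i)²  ≤ 0`. -/
theorem oim_energy_dissipation (N : ℕ) (W : Fin N → Fin N → ℝ)
    (hsymm : ∀ i j, W i j = W j i) (hdiag : ∀ i, W i i = 0)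
    (K Ks : ℝ) (θ : ℝ → Fin N → ℝ) (hθ : Differentiable ℝ θ)
    (hode : ∀ t, deriv θ t = oimField N W K Ks (θ t)) (t : ℝ) :
    HasDerivAt (fun τ : ℝ => oimEnergy N W K Ks (θ τ))
      (-2 * ∑ i, (oimField N W K Ks (θ t) i) ^ 2) t ∧
    -2 * ∑ i, (oimField N W K Ks (θ t) i) ^ 2 ≤ 0 :=
  oim_energy_dissipation_general N W hsymm K Ks θ hθ hode t
end

section
/- At any binary configuration θ with spin vector s (s i = cos(θ i) ∈ {−1, 1}), the OIM energy equals an affine function of the Ising Hamiltonian: E(θ) = 2·K·H(s) − N·K_s, where H(s) = −∑_{i < j} W i j · s i · s j. -/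
/-- The Ising Hamiltonian `H(s) = -∑_{i < j} W i j · s i · s j`. -/
noncomputable def isingH (N : ℕ) (W : Fin N → Fin N → ℝ) (s : Fin N → ℝ) : ℝ :=
  -∑ i, ∑ j ∈ Finset.univ.filter (fun j => i < j), W i j * s i * s j

/-- At any binary configuration `θ` (with spin vector `s i = cos (θ i) ∈ {-1,1}`),
the OIM energy is an affine function of the Ising Hamiltonian:
`E(θ) = 2 K H(s) - N K_s`. -/
theorem oim_energy_eq_ising_at_binary (N : ℕ) (W : Fin N → Fin N → ℝ)
    (hsymm : ∀ i j, W i j = W j i) (hdiag : ∀ i, W i i = 0)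
    (K Ks : ℝ) (θ : Fin N → ℝ) (hθ : ∀ i, θ i = 0 ∨ θ i = Real.pi) :
    oimEnergy N W K Ks θ =
      2 * K * isingH N W (fun i => Real.cos (θ i)) - N * Ks := by
  classical
  have hsin : ∀ i, Real.sin (θ i) = 0 := by
    intro i; rcases hθ i with h | h <;> simp [h]
  have hcos2 : ∀ i, Real.cos (2 * θ i) = 1 := by
    intro i; rcases hθ i with h | h <;> simp [h, Real.cos_two_pi]
  set s : Fin N → ℝ := fun i => Real.cos (θ i) with hs
  have hcossub : ∀ i j, Real.cos (θ i - θ j) = s i * s j := by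
    intro i j; rw [Real.cos_sub, hsin]; simp [hs]
  set g : Fin N → Fin N → ℝ := fun i j => W i j * s i * s j with hg
  have hgsymm : ∀ i j, g i j = g j i := by
    intro i j; simp only [hg, hsymm i j]; ring
  -- split the off-diagonal sum
  have hsplit : ∀ i : Fin N,
      (Finset.univ.filter (fun j => j ≠ i)) =
        (Finset.univ.filter (fun j => i < j)) ∪ (Finset.univ.filter (fun j => j < i)) := by
    intro i
    ext j
    simp only [Finset.mem_filter, Finset.mem_union, Finset.mem_univ, true_and]
    constructor
    · intro h; rcases lt_or_gt_of_ne h with h' | h'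
      · right; exact h'
      · left; exact h'
    · rintro (h | h)
      · exact (ne_of_gt h)
      · exact (ne_of_lt h)
  have hdisj : ∀ i : Fin N,
      Disjoint (Finset.univ.filter (fun j => i < j)) (Finset.univ.filter (fun j => j < i)) := by
    intro i
    rw [Finset.disjoint_filter]
    intro j _ h1 h2
    exact absurd (h1.trans h2) (lt_irrefl i)
  have hswap :
      (∑ i, ∑ j ∈ Finset.univ.filter (fun j => j < i), g i j) =
        ∑ i, ∑ j ∈ Finset.univ.filter (fun j => i < j), g i j := by
    rw [Finset.sum_comm' (s' := fun j => Finset.univ.filter (fun i => j < i))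
      (t' := Finset.univ)]
    · exact Finset.sum_congr rfl fun j _ =>
        Finset.sum_congr rfl fun i _ => hgsymm i j
    · intro i j; simp
  have hdouble :
      (∑ i, ∑ j ∈ Finset.univ.filter (fun j => j ≠ i), g i j) =
        2 * ∑ i, ∑ j ∈ Finset.univ.filter (fun j => i < j), g i j := by
    calc (∑ i, ∑ j ∈ Finset.univ.filter (fun j => j ≠ i), g i j)
        = ∑ i, ((∑ j ∈ Finset.univ.filter (fun j => i < j), g i j)
            + ∑ j ∈ Finset.univ.filter (fun j => j < i), g i j) := by
          refine Finset.sum_congr rfl fun i _ => ?_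
          rw [hsplit i, Finset.sum_union (hdisj i)]
      _ = (∑ i, ∑ j ∈ Finset.univ.filter (fun j => i < j), g i j)
            + ∑ i, ∑ j ∈ Finset.univ.filter (fun j => j < i), g i j := by
          rw [Finset.sum_add_distrib]
      _ = 2 * ∑ i, ∑ j ∈ Finset.univ.filter (fun j => i < j), g i j := by
          rw [hswap]; ring
  have hE : (∑ i, ∑ j ∈ Finset.univ.filter (fun j => j ≠ i),
      W i j * Real.cos (θ i - θ j)) =
        ∑ i, ∑ j ∈ Finset.univ.filter (fun j => j ≠ i), g i j := by
    refine Finset.sum_congr rfl fun i _ => Finset.sum_congr rfl fun j _ => ?_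
    rw [hcossub i j]; simp [hg, mul_assoc]
  simp only [oimEnergy, isingH, hE, hdouble, hcos2, Finset.sum_const,
    Finset.card_univ, Fintype.card_fin, nsmul_eq_mul, mul_one]
  simp only [hg]
  ring
end

section
/- For K > 0, a binary configuration θ* minimizes the OIM energy E among all binary configurations if and only if its spin vector s* minimizes the Ising Hamiltonian H among all spin vectors in {−1, 1}^N. -/
lemma binary_energy_eq (N : ℕ) (W : Fin N → Fin N → ℝ)
    (hsymm : ∀ i j, W i j = W j i) (hdiag : ∀ i, W i i = 0)
    (K Ks : ℝ) (θ : Fin N → ℝ) (hθ : ∀ i, θ i = 0 ∨ θ i = Real.pi) :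
    (-K * ∑ i, ∑ j ∈ Finset.univ.filter (fun j => j ≠ i), W i j * Real.cos (θ i - θ j)
      - Ks * ∑ i, Real.cos (2 * θ i))
    = 2 * K * (-∑ i, ∑ j ∈ Finset.univ.filter (fun j => i < j),
          W i j * Real.cos (θ i) * Real.cos (θ j)) - Ks * N := by
  have hsin : ∀ i, Real.sin (θ i) = 0 := by
    intro i; rcases hθ i with h | h <;> simp [h]
  have hcos2 : ∀ i, Real.cos (2 * θ i) = 1 := by
    intro i; rcases hθ i with h | h <;> simp [h, Real.cos_two_pi]
  have hc : ∀ i j, Real.cos (θ i - θ j) = Real.cos (θ i) * Real.cos (θ j) := by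
    intro i j; rw [Real.cos_sub, hsin, hsin]; ring
  have h2 : (∑ i, Real.cos (2 * θ i)) = (N : ℝ) := by
    simp [hcos2]
  have key : (∑ i, ∑ j ∈ Finset.univ.filter (fun j => j ≠ i),
        W i j * Real.cos (θ i - θ j))
      = 2 * ∑ i, ∑ j ∈ Finset.univ.filter (fun j => i < j),
          W i j * Real.cos (θ i) * Real.cos (θ j) := by
    have split : ∀ i : Fin N, (∑ j ∈ Finset.univ.filter (fun j => j ≠ i),
        W i j * Real.cos (θ i - θ j))
        = (∑ j ∈ Finset.univ.filter (fun j => i < j), W i j * Real.cos (θ i) * Real.cos (θ j))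
          + (∑ j ∈ Finset.univ.filter (fun j => j < i), W i j * Real.cos (θ i) * Real.cos (θ j)) := by
      intro i
      have : (Finset.univ.filter (fun j => j ≠ i) : Finset (Fin N))
          = Finset.univ.filter (fun j => i < j) ∪ Finset.univ.filter (fun j => j < i) := by
        ext j; simp only [Finset.mem_filter, Finset.mem_union, Finset.mem_univ, true_and]
        constructor
        · intro h; exact (Ne.symm h).lt_or_gt
        · rintro (h | h)
          exacts [h.ne', h.ne]
      rw [this, Finset.sum_union]
      · congr 1 <;> (apply Finset.sum_congr rfl; intro j _; rw [hc]; ring)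
      · rw [Finset.disjoint_filter]
        intro j _ h1 h2; exact absurd (lt_trans h1 h2) (lt_irrefl i)
    rw [Finset.sum_congr rfl (fun i _ => split i), Finset.sum_add_distrib]
    have swap : (∑ i, ∑ j ∈ Finset.univ.filter (fun j => j < i),
          W i j * Real.cos (θ i) * Real.cos (θ j))
        = ∑ i, ∑ j ∈ Finset.univ.filter (fun j => i < j),
          W i j * Real.cos (θ i) * Real.cos (θ j) := by
      rw [Finset.sum_sigma', Finset.sum_sigma']
      apply Finset.sum_nbij' (fun p => ⟨p.2, p.1⟩) (fun p => ⟨p.2, p.1⟩)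
      · intro a ha; simp at ha ⊢; exact ha
      · intro a ha; simp at ha ⊢; exact ha
      · intro a _; rfl
      · intro a _; rfl
      · intro a _; rw [hsymm]; ring
    rw [swap]; ring
  rw [key, h2]; ring


/-- For `K > 0`, a binary configuration `θ*` minimizes the OIM energy `E` among
all binary configurations iff its spin vector `s* i = cos (θ* i)` minimizes the
Ising Hamiltonian `H` among all spin vectors in `{-1,1}^N`. -/
theorem oim_binary_energy_min_iff_ising_min (N : ℕ) (W : Fin N → Fin N → ℝ)
    (hsymm : ∀ i j, W i j = W j i) (hdiag : ∀ i, W i i = 0)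
    (K Ks : ℝ) (hK : 0 < K)
    (θs : Fin N → ℝ) (hθs : ∀ i, θs i = 0 ∨ θs i = Real.pi) :
    (∀ θ : Fin N → ℝ, (∀ i, θ i = 0 ∨ θ i = Real.pi) →
        oimEnergy N W K Ks θs ≤ oimEnergy N W K Ks θ) ↔
    (∀ s : Fin N → ℝ, (∀ i, s i = -1 ∨ s i = 1) →
        isingH N W (fun i => Real.cos (θs i)) ≤ isingH N W s) := by
  have E_eq : ∀ θ (hθ : ∀ i, θ i = 0 ∨ θ i = Real.pi),
      oimEnergy N W K Ks θ = 2 * K * isingH N W (fun i => Real.cos (θ i)) - Ks * N := by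
    intro θ hθ
    have := binary_energy_eq N W hsymm hdiag K Ks θ hθ
    simpa [oimEnergy, isingH] using this
  constructor
  · intro h s hs
    set θ' : Fin N → ℝ := fun i => if s i = 1 then 0 else Real.pi with hθ'def
    have hθ' : ∀ i, θ' i = 0 ∨ θ' i = Real.pi := by
      intro i; by_cases h1 : s i = 1 <;> simp [hθ'def, h1]
    have hcos : ∀ i, Real.cos (θ' i) = s i := by
      intro i; rcases hs i with h1 | h1 <;> norm_num [hθ'def, h1]
    have := h θ' hθ'
    rw [E_eq θs hθs, E_eq θ' hθ'] at this
    simp only [hcos] at this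
    have h2 : 2 * K * isingH N W (fun i => Real.cos (θs i)) ≤ 2 * K * isingH N W s := by
      linarith
    have hK2 : (0:ℝ) < 2 * K := by linarith
    exact le_of_mul_le_mul_left h2 hK2
  · intro h θ hθ
    have hs : ∀ i, Real.cos (θ i) = -1 ∨ Real.cos (θ i) = 1 := by
      intro i; rcases hθ i with h1 | h1 <;> simp [h1]
    have := h (fun i => Real.cos (θ i)) hs
    rw [E_eq θs hθs, E_eq θ hθ]
    nlinarith
end
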